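/- arXiv:2304.10426 — 10 statements merged into one kernel-verified Lean document; each statement's English description precedes it below -/
import Mathlib

section
/- For all n ≥ 0, ∑_{k=0}^n C(n,k) F_k F_{n-k} = (2^n L_n − 2)/5, where F_n are the Fibonacci numbers and L_n are the Lucas numbers. -/
def lucas : ℕ → ℤ
  | 0 => 2
  | 1 => 1
  | n + 2 => lucas (n + 1) + lucas n

lemma lucas_eq_fib (k : ℕ) : lucas k = 2 * Nat.fib (k + 1) - Nat.fib k := by
  induction k using Nat.twoStepInduction with
  | zero => simp [lucas]
  | one => simp [lucas]
  | more k ih1 ih2 =>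
    have f1 : (Nat.fib (k+1+1) : ℤ) = Nat.fib k + Nat.fib (k+1) := by
      exact_mod_cast Nat.fib_add_two
    have f2 : (Nat.fib (k+2+1) : ℤ) = Nat.fib (k+1) + Nat.fib (k+1+1) := by
      exact_mod_cast Nat.fib_add_two
    have f3 : (Nat.fib (k+2) : ℤ) = Nat.fib k + Nat.fib (k+1) := by
      exact_mod_cast Nat.fib_add_two
    rw [lucas, ih1, ih2]
    linarith

section
open Zsqrtd Finset

private def aa : ℤ√5 := ⟨1, 1⟩
private def bb : ℤ√5 := ⟨1, -1⟩

private lemma lucas_succ_two (k : ℕ) :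
    (lucas (k+1) : ℤ) * 2 = lucas k + 5 * Nat.fib k := by
  rw [lucas_eq_fib, lucas_eq_fib, Nat.fib_add_two]; push_cast; ring

private lemma fib_succ_two (k : ℕ) :
    (Nat.fib (k+1) : ℤ) * 2 = lucas k + Nat.fib k := by
  rw [lucas_eq_fib]; push_cast; ring

private lemma two_pow_a (k : ℕ) :
    2 * aa ^ k = ⟨2 ^ k * lucas k, 2 ^ k * Nat.fib k⟩ := by
  induction k with
  | zero => rw [Zsqrtd.ext_iff]; simp [lucas]
  | succ k ih =>
    have h1 := lucas_succ_two k
    have h2 := fib_succ_two k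
    have h : 2 * aa ^ (k+1) = aa * (2 * aa ^ k) := by ring
    rw [h, ih, Zsqrtd.ext_iff]
    simp only [Zsqrtd.re_mul, Zsqrtd.im_mul, aa]
    constructor
    · linear_combination (-(2:ℤ) ^ k) * h1
    · linear_combination (-(2:ℤ) ^ k) * h2

private lemma two_pow_b (k : ℕ) :
    2 * bb ^ k = ⟨2 ^ k * lucas k, -(2 ^ k * Nat.fib k)⟩ := by
  induction k with
  | zero => rw [Zsqrtd.ext_iff]; simp [lucas]
  | succ k ih =>
    have h1 := lucas_succ_two k
    have h2 := fib_succ_two k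
    have h : 2 * bb ^ (k+1) = bb * (2 * bb ^ k) := by ring
    rw [h, ih, Zsqrtd.ext_iff]
    simp only [Zsqrtd.re_mul, Zsqrtd.im_mul, bb]
    constructor
    · linear_combination (-(2:ℤ) ^ k) * h1
    · linear_combination (2:ℤ) ^ k * h2

end

theorem binomial_conv_fib_fib (n : ℕ) :
    5 * ∑ k ∈ Finset.range (n + 1),
        (n.choose k : ℤ) * Nat.fib k * Nat.fib (n - k) =
      2 ^ n * lucas n - 2 := by
  set A : ℤ := ∑ k ∈ Finset.range (n + 1),
      (n.choose k : ℤ) * Nat.fib k * Nat.fib (n - k) with hA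
  set S : ℤ√5 := ∑ k ∈ Finset.range (n + 1), (n.choose k : ℤ√5) *
      ((2 * aa ^ k - 2 * bb ^ k) * (2 * aa ^ (n - k) - 2 * bb ^ (n - k))) with hS
  have side1 : S = ((2 ^ (n + 2) * (5 * A) : ℤ) : ℤ√5) := by
    rw [hS, hA, Finset.mul_sum, Finset.mul_sum, Int.cast_sum]
    refine Finset.sum_congr rfl fun k hk => ?_
    have hkn : k ≤ n := Nat.lt_succ_iff.mp (Finset.mem_range.mp hk)
    have e1 : 2 * aa ^ k - 2 * bb ^ k = ⟨0, 2 * (2 ^ k * Nat.fib k)⟩ := by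
      rw [two_pow_a, two_pow_b, Zsqrtd.ext_iff]
      constructor <;> simp <;> ring
    have e2 : 2 * aa ^ (n - k) - 2 * bb ^ (n - k) =
        ⟨0, 2 * (2 ^ (n - k) * Nat.fib (n - k))⟩ := by
      rw [two_pow_a, two_pow_b, Zsqrtd.ext_iff]
      constructor <;> simp <;> ring
    have hpow : (2:ℤ) ^ k * 2 ^ (n - k) = 2 ^ n := by
      rw [← pow_add, Nat.add_sub_cancel' hkn]
    rw [e1, e2, Zsqrtd.ext_iff]
    simp only [Zsqrtd.re_mul, Zsqrtd.im_mul, Zsqrtd.re_intCast, Zsqrtd.im_intCast,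
      Zsqrtd.re_natCast, Zsqrtd.im_natCast]
    constructor
    · linear_combination (20 * (n.choose k : ℤ) * (Nat.fib k : ℤ) *
        (Nat.fib (n - k) : ℤ)) * hpow
    · ring
  have side2 : S = 4 * 2 ^ n * (aa ^ n + bb ^ n) - 8 * 2 ^ n := by
    have expand : ∀ k ∈ Finset.range (n + 1), (n.choose k : ℤ√5) *
        ((2 * aa ^ k - 2 * bb ^ k) * (2 * aa ^ (n - k) - 2 * bb ^ (n - k))) =
        (4 * (aa ^ k * aa ^ (n - k) * (n.choose k : ℤ√5))
        + 4 * (bb ^ k * bb ^ (n - k) * (n.choose k : ℤ√5)))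
        - (4 * (aa ^ k * bb ^ (n - k) * (n.choose k : ℤ√5))
        + 4 * (bb ^ k * aa ^ (n - k) * (n.choose k : ℤ√5))) := by
      intro k _; ring
    rw [hS, Finset.sum_congr rfl expand, Finset.sum_sub_distrib,
      Finset.sum_add_distrib, Finset.sum_add_distrib,
      ← Finset.mul_sum, ← Finset.mul_sum, ← Finset.mul_sum, ← Finset.mul_sum]
    have hdiag : ∀ c : ℤ√5, ∑ k ∈ Finset.range (n + 1),
        c ^ k * c ^ (n - k) * (n.choose k : ℤ√5) = 2 ^ n * c ^ n := by
      intro c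
      have h1 : ∀ k ∈ Finset.range (n + 1),
          c ^ k * c ^ (n - k) * (n.choose k : ℤ√5) = (n.choose k : ℤ√5) * c ^ n := by
        intro k hk
        have hkn : k ≤ n := Nat.lt_succ_iff.mp (Finset.mem_range.mp hk)
        rw [← pow_add, Nat.add_sub_cancel' hkn]; ring
      rw [Finset.sum_congr rfl h1, ← Finset.sum_mul]
      have h2 : (∑ k ∈ Finset.range (n + 1), (n.choose k : ℤ√5)) = 2 ^ n := by
        rw [← Nat.cast_sum, Nat.sum_range_choose]
        push_cast; ring
      rw [h2]
    have hcross1 : ∑ k ∈ Finset.range (n + 1),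
        aa ^ k * bb ^ (n - k) * (n.choose k : ℤ√5) = 2 ^ n := by
      rw [← add_pow]
      have h : aa + bb = 2 := by rw [Zsqrtd.ext_iff]; simp [aa, bb]
      rw [h]
    have hcross2 : ∑ k ∈ Finset.range (n + 1),
        bb ^ k * aa ^ (n - k) * (n.choose k : ℤ√5) = 2 ^ n := by
      rw [← add_pow]
      have h : bb + aa = 2 := by rw [Zsqrtd.ext_iff]; simp [aa, bb]
      rw [h]
    rw [hdiag aa, hdiag bb, hcross1, hcross2]
    ring
  have hsum : 2 * (aa ^ n + bb ^ n) = ((2 ^ (n+1) * lucas n : ℤ) : ℤ√5) := by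
    rw [mul_add, two_pow_a, two_pow_b, Zsqrtd.ext_iff]
    simp only [Zsqrtd.re_add, Zsqrtd.im_add, Zsqrtd.re_intCast, Zsqrtd.im_intCast]
    constructor <;> ring
  have key : ((2 ^ (n + 3) * (5 * A) : ℤ) : ℤ√5)
      = ((2 ^ (n + 3) * (2 ^ n * lucas n - 2) : ℤ) : ℤ√5) := by
    have h2S : 2 * S = 4 * 2 ^ n * (2 * (aa ^ n + bb ^ n)) - 16 * 2 ^ n := by
      rw [side2]; ring
    rw [hsum] at h2S
    have hL : (2 : ℤ√5) * S = ((2 ^ (n + 3) * (5 * A) : ℤ) : ℤ√5) := by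
      rw [side1]; push_cast; ring
    rw [hL] at h2S
    rw [h2S]
    push_cast; ring
  have key2 : (2 : ℤ) ^ (n + 3) * (5 * A) = 2 ^ (n + 3) * (2 ^ n * lucas n - 2) :=
    Int.cast_injective key
  have h2 : (2 : ℤ) ^ (n + 3) ≠ 0 := by positivity
  exact mul_left_cancel₀ h2 key2
end

section
/- For all n ≥ 0, ∑_{k=0}^{⌊n/2⌋} C(n,2k) F_{n-2k} = ((−1)^{n−1} F_n + F_{2n})/2. -/
open Finset

private lemma pascal_sum (f : ℕ → ℤ) (n : ℕ) :
    ∑ k ∈ range (n + 2), ((n + 1).choose k : ℤ) * f k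
      = ∑ k ∈ range (n + 1), (n.choose k : ℤ) * f k
        + ∑ k ∈ range (n + 1), (n.choose k : ℤ) * f (k + 1) := by
  rw [Finset.sum_range_succ' (fun k => ((n + 1).choose k : ℤ) * f k)]
  have h : ∀ k, (((n + 1).choose (k + 1) : ℕ) : ℤ) = n.choose k + n.choose (k + 1) := by
    intro k
    rw [Nat.choose_succ_succ]
    push_cast
    ring
  have : ∑ k ∈ range (n + 1), ((n + 1).choose (k + 1) : ℤ) * f (k + 1)
      = ∑ k ∈ range (n + 1), ((n.choose k : ℤ) * f (k + 1) + (n.choose (k + 1) : ℤ) * f (k + 1)) := by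
    refine Finset.sum_congr rfl fun k _ => ?_
    rw [h k]; ring
  rw [this, Finset.sum_add_distrib]
  have h2 : ∑ k ∈ range (n + 1), (n.choose (k + 1) : ℤ) * f (k + 1) + ((n + 1).choose 0 : ℤ) * f 0
      = ∑ k ∈ range (n + 1), (n.choose k : ℤ) * f k := by
    rw [show (((n+1).choose 0 : ℕ) : ℤ) * f 0 = (n.choose 0 : ℤ) * f 0 by simp]
    rw [← Finset.sum_range_succ' (fun k => (n.choose k : ℤ) * f k)]
    rw [Finset.sum_range_succ]
    simp
  linarith [h2]

private lemma fibAB (n : ℕ) :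
    (∑ k ∈ range (n + 1), (n.choose k : ℤ) * Nat.fib k = Nat.fib (2 * n)) ∧
    (∑ k ∈ range (n + 1), (n.choose k : ℤ) * Nat.fib (k + 1) = Nat.fib (2 * n + 1)) := by
  induction n with
  | zero => simp
  | succ n ih =>
    obtain ⟨hA, hB⟩ := ih
    constructor
    · rw [show n + 1 + 1 = n + 2 from rfl, pascal_sum (fun k => (Nat.fib k : ℤ)) n, hA, hB]
      rw [show 2 * (n + 1) = 2 * n + 1 + 1 by ring, Nat.fib_add_two]
      push_cast; ring
    · rw [show n + 1 + 1 = n + 2 from rfl, pascal_sum (fun k => (Nat.fib (k + 1) : ℤ)) n]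
      have : ∑ k ∈ range (n + 1), (n.choose k : ℤ) * Nat.fib (k + 1 + 1)
          = ∑ k ∈ range (n + 1), ((n.choose k : ℤ) * Nat.fib k + (n.choose k : ℤ) * Nat.fib (k + 1)) := by
        refine Finset.sum_congr rfl fun k _ => ?_
        rw [Nat.fib_add_two]; push_cast; ring
      rw [this, Finset.sum_add_distrib, hA, hB]
      rw [show 2 * (n + 1) + 1 = 2 * n + 1 + 1 + 1 by ring, Nat.fib_add_two, Nat.fib_add_two]
      push_cast; ring

private lemma fibCD (n : ℕ) :
    (∑ k ∈ range (n + 1), (n.choose k : ℤ) * ((-1) ^ k * Nat.fib k) = -Nat.fib n) ∧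
    (∑ k ∈ range (n + 1), (n.choose k : ℤ) * ((-1) ^ k * Nat.fib (k + 1))
        = Nat.fib (n + 1) - Nat.fib n) := by
  induction n with
  | zero => simp
  | succ n ih =>
    obtain ⟨hC, hD⟩ := ih
    constructor
    · rw [show n + 1 + 1 = n + 2 from rfl,
        pascal_sum (fun k => ((-1) ^ k * Nat.fib k : ℤ)) n, hC]
      have : ∑ k ∈ range (n + 1), (n.choose k : ℤ) * ((-1) ^ (k + 1) * Nat.fib (k + 1))
          = -∑ k ∈ range (n + 1), (n.choose k : ℤ) * ((-1) ^ k * Nat.fib (k + 1)) := by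
        rw [← Finset.sum_neg_distrib]
        refine Finset.sum_congr rfl fun k _ => ?_
        ring
      rw [this, hD]
      ring
    · rw [show n + 1 + 1 = n + 2 from rfl,
        pascal_sum (fun k => ((-1) ^ k * Nat.fib (k + 1) : ℤ)) n, hD]
      have : ∑ k ∈ range (n + 1), (n.choose k : ℤ) * ((-1) ^ (k + 1) * Nat.fib (k + 1 + 1))
          = -∑ k ∈ range (n + 1), ((n.choose k : ℤ) * ((-1) ^ k * Nat.fib k)
              + (n.choose k : ℤ) * ((-1) ^ k * Nat.fib (k + 1))) := by
        rw [← Finset.sum_neg_distrib]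
        refine Finset.sum_congr rfl fun k _ => ?_
        rw [Nat.fib_add_two]; push_cast; ring
      rw [this, Finset.sum_add_distrib, hC, hD]
      rw [show n + 1 + 1 = n + 2 from rfl, Nat.fib_add_two]
      push_cast; ring

private lemma reindex (n : ℕ) :
    ∑ k ∈ range (n + 1), (n.choose k : ℤ) * Nat.fib k * (1 + (-1) ^ (n + k))
      = 2 * ∑ j ∈ range (n / 2 + 1), (n.choose (2 * j) : ℤ) * Nat.fib (n - 2 * j) := by
  rw [Finset.mul_sum]
  rw [← Finset.sum_filter_of_ne (p := fun k => (n + k) % 2 = 0)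
      (f := fun k => (n.choose k : ℤ) * Nat.fib k * (1 + (-1) ^ (n + k)))]
  · refine Finset.sum_nbij' (fun k => (n - k) / 2) (fun j => n - 2 * j) ?_ ?_ ?_ ?_ ?_
    · intro k hk
      simp only [Finset.mem_filter, Finset.mem_range] at hk ⊢
      omega
    · intro j hj
      simp only [Finset.mem_filter, Finset.mem_range] at hj ⊢
      omega
    · intro k hk
      simp only [Finset.mem_filter, Finset.mem_range] at hk
      show n - 2 * ((n - k) / 2) = k
      omega
    · intro j hj
      simp only [Finset.mem_range] at hj
      show (n - (n - 2 * j)) / 2 = j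
      omega
    · intro k hk
      simp only [Finset.mem_filter, Finset.mem_range] at hk
      show (n.choose k : ℤ) * Nat.fib k * (1 + (-1) ^ (n + k))
          = 2 * ((n.choose (2 * ((n - k) / 2)) : ℤ) * Nat.fib (n - 2 * ((n - k) / 2)))
      rw [show 2 * ((n - k) / 2) = n - k by omega, show n - (n - k) = k by omega,
        Nat.choose_symm (show k ≤ n by omega)]
      have he : Even (n + k) := Nat.even_iff.mpr hk.2
      rw [Even.neg_one_pow he]
      ring
  · intro k hk hne
    simp only [Finset.mem_range] at hk
    by_contra hodd
    apply hne
    have hodd' : Odd (n + k) := Nat.odd_iff.mpr (by omega)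
    rw [Odd.neg_one_pow hodd']
    ring

theorem binomial_even_conv_fib (n : ℕ) :
    2 * ∑ k ∈ Finset.range (n / 2 + 1),
        (n.choose (2 * k) : ℤ) * Nat.fib (n - 2 * k) =
      (-1) ^ (n + 1) * Nat.fib n + Nat.fib (2 * n) := by
  rw [← reindex]
  have hA := (fibAB n).1
  have hC := (fibCD n).1
  have split : ∑ k ∈ range (n + 1), (n.choose k : ℤ) * Nat.fib k * (1 + (-1) ^ (n + k))
      = ∑ k ∈ range (n + 1), ((n.choose k : ℤ) * Nat.fib k
          + (-1) ^ n * ((n.choose k : ℤ) * ((-1) ^ k * Nat.fib k))) := by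
    refine Finset.sum_congr rfl fun k _ => ?_
    rw [pow_add]; ring
  rw [split, Finset.sum_add_distrib, ← Finset.mul_sum, hA, hC]
  ring
end

section
/- For all n ≥ 0, 10·∑_{k=0}^{⌊n/2⌋} C(n,2k) 5^k F_{n-2k}^2 = L_{2n} + (3^n + (−1)^{n+1}·2^{n+1}) L_n. -/
namespace BinomFibAux

open Finset

abbrev a : Zsqrtd 5 := ⟨1, 1⟩
abbrev b : Zsqrtd 5 := ⟨1, -1⟩

lemma a_sq : a ^ 2 = 2 * a + 4 := by
  rw [Zsqrtd.ext_iff]; constructor <;> simp [pow_two, Zsqrtd.re_mul, Zsqrtd.im_mul]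

lemma b_sq : b ^ 2 = 2 * b + 4 := by
  rw [Zsqrtd.ext_iff]; constructor <;> simp [pow_two, Zsqrtd.re_mul, Zsqrtd.im_mul]

lemma pow_add_pow (m : ℕ) : a ^ m + b ^ m = ((2 ^ m * lucas m : ℤ) : Zsqrtd 5) := by
  induction m using Nat.twoStepInduction with
  | zero => norm_num [lucas]
  | one =>
    rw [Zsqrtd.ext_iff]; constructor <;> simp [lucas]
  | more m ih1 ih2 =>
    have ha : a ^ (m + 2) = 2 * a ^ (m + 1) + 4 * a ^ m := by
      have h : a ^ (m + 2) = a ^ m * a ^ 2 := by ring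
      rw [h, a_sq]; ring
    have hb : b ^ (m + 2) = 2 * b ^ (m + 1) + 4 * b ^ m := by
      have h : b ^ (m + 2) = b ^ m * b ^ 2 := by ring
      rw [h, b_sq]; ring
    have hl : lucas (m + 2) = lucas (m + 1) + lucas m := rfl
    have h : a ^ (m+2) + b ^ (m+2)
        = 2 * (a ^ (m+1) + b ^ (m+1)) + 4 * (a ^ m + b ^ m) := by rw [ha, hb]; ring
    rw [h, ih2, ih1, hl]
    push_cast
    ring

lemma pow_sub_pow (m : ℕ) : a ^ m - b ^ m = ⟨0, 2 ^ m * Nat.fib m⟩ := by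
  induction m using Nat.twoStepInduction with
  | zero => simp [Zsqrtd.ext_iff]
  | one => simp [Zsqrtd.ext_iff, pow_one]
  | more m ih1 ih2 =>
    have ha : a ^ (m + 2) = 2 * a ^ (m + 1) + 4 * a ^ m := by
      have h : a ^ (m + 2) = a ^ m * a ^ 2 := by ring
      rw [h, a_sq]; ring
    have hb : b ^ (m + 2) = 2 * b ^ (m + 1) + 4 * b ^ m := by
      have h : b ^ (m + 2) = b ^ m * b ^ 2 := by ring
      rw [h, b_sq]; ring
    have h : a ^ (m+2) - b ^ (m+2) = 2 * (a ^ (m+1) - b ^ (m+1)) + 4 * (a ^ m - b ^ m) := by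
      rw [ha, hb]; ring
    rw [h, ih2, ih1, Nat.fib_add_two]
    rw [Zsqrtd.ext_iff]
    constructor <;> simp [Zsqrtd.re_mul, Zsqrtd.im_mul] <;> push_cast <;> ring

/-- even-part binomial lemma -/
lemma even_part (x v : Zsqrtd 5) (c : ℤ) (h : v * v = (c : Zsqrtd 5)) (n : ℕ) :
    (v + x) ^ n + (-v + x) ^ n =
      ∑ j ∈ range (n / 2 + 1),
        2 * (c : Zsqrtd 5) ^ j * ((n.choose (2 * j) : ℤ) : Zsqrtd 5) * x ^ (n - 2 * j) := by
  rw [add_pow, add_pow, ← Finset.sum_add_distrib]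
  rw [← Finset.sum_filter_of_ne (p := fun k => Even k)
    (f := fun k => v ^ k * x ^ (n - k) * ((n.choose k : ℕ) : Zsqrtd 5)
      + (-v) ^ k * x ^ (n - k) * ((n.choose k : ℕ) : Zsqrtd 5)) ?_]
  · refine Finset.sum_nbij' (fun k => k / 2) (fun j => 2 * j) ?_ ?_ ?_ ?_ ?_
    · intro k hk
      simp only [mem_filter, mem_range] at hk
      obtain ⟨hkn, j, hj⟩ := hk
      simp only [mem_range]
      omega
    · intro j hj
      simp only [mem_range] at hj
      simp only [mem_filter, mem_range]
      exact ⟨by omega, even_two_mul j⟩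
    · intro k hk
      simp only [mem_filter, mem_range] at hk
      obtain ⟨hkn, j, hj⟩ := hk
      omega
    · intro j hj; omega
    · intro k hk
      simp only [mem_filter, mem_range] at hk
      obtain ⟨hkn, j, hj⟩ := hk
      have hk2 : k = 2 * j := by omega
      subst hk2
      have h1 : v ^ (2 * j) = (c : Zsqrtd 5) ^ j := by
        rw [pow_mul, sq, h]
      have h2 : (-v) ^ (2 * j) = (c : Zsqrtd 5) ^ j := by
        have hnv : (-v) ^ 2 = v * v := by ring
        rw [pow_mul, hnv, h]
      rw [h1, h2]
      have h3 : 2 * j / 2 = j := by omega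
      rw [h3]
      push_cast
      ring
  · intro k _ hne
    by_contra hodd
    have hpow : (-v) ^ k = -(v ^ k) := Odd.neg_pow (Nat.not_even_iff_odd.mp hodd) v
    rw [hpow] at hne
    exact hne (by ring)

lemma ab : a * b = -4 := by
  rw [Zsqrtd.ext_iff]; constructor <;> simp [Zsqrtd.re_mul, Zsqrtd.im_mul]

/-- 5 F_m^2 = L_{2m} - 2(-1)^m -/
lemma five_fib_sq (m : ℕ) : 5 * (Nat.fib m : ℤ) ^ 2 = lucas (2 * m) - 2 * (-1) ^ m := by
  have h1 : (a ^ m - b ^ m) ^ 2 = a ^ (2 * m) + b ^ (2 * m) - 2 * (a * b) ^ m := by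
    rw [two_mul, pow_add, pow_add, mul_pow]; ring
  rw [ab] at h1
  have hs : (⟨0,1⟩ : Zsqrtd 5) * ⟨0,1⟩ = 5 := by
    rw [Zsqrtd.ext_iff]; constructor <;> simp [Zsqrtd.re_mul, Zsqrtd.im_mul]
  have ht : ∀ t : ℤ, (⟨0, t⟩ : Zsqrtd 5) = (t : Zsqrtd 5) * ⟨0,1⟩ := by
    intro t
    rw [Zsqrtd.ext_iff]
    constructor <;> simp [Zsqrtd.re_mul, Zsqrtd.im_mul]
  have h2 : (a ^ m - b ^ m) ^ 2 = ((5 * (2 ^ m * (Nat.fib m : ℤ)) ^ 2 : ℤ) : Zsqrtd 5) := by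
    rw [pow_sub_pow, ht (2 ^ m * (Nat.fib m : ℤ))]
    have hq : (((2 ^ m * (Nat.fib m : ℤ) : ℤ) : Zsqrtd 5) * ⟨0,1⟩) ^ 2
        = ((2 ^ m * (Nat.fib m : ℤ) : ℤ) : Zsqrtd 5) ^ 2 * ((⟨0,1⟩ : Zsqrtd 5) * ⟨0,1⟩) := by
      ring
    rw [hq, hs]
    push_cast
    ring
  have h3 : ((-4 : Zsqrtd 5)) ^ m = (((-4 : ℤ) ^ m : ℤ) : Zsqrtd 5) := by push_cast; ring
  rw [h2, pow_add_pow (2 * m), h3] at h1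
  have hint : (5 * (2 ^ m * (Nat.fib m : ℤ)) ^ 2 : ℤ) = 2 ^ (2 * m) * lucas (2 * m) - 2 * (-4) ^ m := by
    exact_mod_cast h1
  have e1 : (2:ℤ) ^ (2 * m) = 4 ^ m := by
    rw [show (4:ℤ) = 2^2 by norm_num, ← pow_mul]
  have e2 : ((-4):ℤ) ^ m = (-1) ^ m * 4 ^ m := by
    rw [neg_pow]
  have e3 : ((2:ℤ) ^ m) ^ 2 = 4 ^ m := by
    rw [← pow_mul, mul_comm, e1]
  rw [mul_pow, e3, e1, e2] at hint
  have h4 : (4 : ℤ) ^ m ≠ 0 := by positivity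
  apply mul_left_cancel₀ h4
  linear_combination hint

end BinomFibAux

open Finset BinomFibAux in
theorem binomial_even_conv_fib_sq (n : ℕ) :
    10 * ∑ k ∈ Finset.range (n / 2 + 1),
        (n.choose (2 * k) : ℤ) * 5 ^ k * (Nat.fib (n - 2 * k) : ℤ) ^ 2 =
      lucas (2 * n) + (3 ^ n + (-1) ^ (n + 1) * 2 ^ (n + 1)) * lucas n := by
  -- abbreviations
  set A : ℤ := ∑ k ∈ range (n / 2 + 1),
      (n.choose (2 * k) : ℤ) * 5 ^ k * lucas (2 * (n - 2 * k)) with hAdef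
  set B : ℤ := ∑ k ∈ range (n / 2 + 1), (n.choose (2 * k) : ℤ) * 5 ^ k with hBdef
  -- Step 1: 10 * S = 2 * A - 4 * (-1)^n * B
  have hS : 10 * ∑ k ∈ Finset.range (n / 2 + 1),
        (n.choose (2 * k) : ℤ) * 5 ^ k * (Nat.fib (n - 2 * k) : ℤ) ^ 2
      = 2 * A - 4 * (-1) ^ n * B := by
    rw [hAdef, hBdef, Finset.mul_sum, Finset.mul_sum, Finset.mul_sum, ← Finset.sum_sub_distrib]
    refine Finset.sum_congr rfl fun k hk => ?_
    have hk' : 2 * k ≤ n := by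
      simp only [mem_range] at hk; omega
    have hm := five_fib_sq (n - 2 * k)
    have hsign : ((-1 : ℤ)) ^ (n - 2 * k) = (-1) ^ n := by
      have hnk : n - 2 * k + 2 * k = n := by omega
      calc ((-1 : ℤ)) ^ (n - 2 * k) = (-1) ^ (n - 2 * k) * ((-1) ^ 2) ^ k := by norm_num
        _ = (-1) ^ (n - 2 * k + 2 * k) := by rw [← pow_mul, ← pow_add]
        _ = (-1) ^ n := by rw [hnk]
    rw [← hsign]
    linear_combination (2 * (n.choose (2 * k) : ℤ) * 5 ^ k) * hm
  -- Step 2: B identity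
  have hv : (⟨0, 1⟩ : Zsqrtd 5) * ⟨0, 1⟩ = ((5 : ℤ) : Zsqrtd 5) := by
    rw [Zsqrtd.ext_iff]; constructor <;> simp [Zsqrtd.re_mul, Zsqrtd.im_mul]
  have hva : (⟨0, 1⟩ : Zsqrtd 5) + 1 = a := by
    rw [Zsqrtd.ext_iff]; constructor <;> simp
  have hvb : -(⟨0, 1⟩ : Zsqrtd 5) + 1 = b := by
    rw [Zsqrtd.ext_iff]; constructor <;> simp
  have eB := even_part 1 ⟨0, 1⟩ 5 hv n
  rw [hva, hvb, pow_add_pow n] at eB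
  have hBz : (((2 : ℤ) ^ n * lucas n : ℤ) : Zsqrtd 5) = ((2 * B : ℤ) : Zsqrtd 5) := by
    rw [eB, hBdef]
    push_cast
    rw [Finset.mul_sum]
    refine Finset.sum_congr rfl fun k hk => ?_
    ring
  have hB : (2 : ℤ) ^ n * lucas n = 2 * B := Int.cast_inj.mp hBz
  -- Step 3: A identity
  have hw : (⟨0, 4⟩ : Zsqrtd 5) * ⟨0, 4⟩ = ((80 : ℤ) : Zsqrtd 5) := by
    rw [Zsqrtd.ext_iff]; constructor <;> simp [Zsqrtd.re_mul, Zsqrtd.im_mul]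
  have hwa : (⟨0, 4⟩ : Zsqrtd 5) + a ^ 2 = 6 * a := by
    rw [Zsqrtd.ext_iff]
    constructor <;> simp [pow_two, Zsqrtd.re_mul, Zsqrtd.im_mul]
  have hwb : -(⟨0, 4⟩ : Zsqrtd 5) + a ^ 2 = b ^ 2 := by
    rw [Zsqrtd.ext_iff]
    constructor <;> simp [pow_two, Zsqrtd.re_mul, Zsqrtd.im_mul]
  have hwc : (⟨0, 4⟩ : Zsqrtd 5) + b ^ 2 = a ^ 2 := by
    rw [Zsqrtd.ext_iff]
    constructor <;> simp [pow_two, Zsqrtd.re_mul, Zsqrtd.im_mul]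
  have hwd : -(⟨0, 4⟩ : Zsqrtd 5) + b ^ 2 = 6 * b := by
    rw [Zsqrtd.ext_iff]
    constructor <;> simp [pow_two, Zsqrtd.re_mul, Zsqrtd.im_mul]
  have eA1 := even_part (a ^ 2) ⟨0, 4⟩ 80 hw n
  have eA2 := even_part (b ^ 2) ⟨0, 4⟩ 80 hw n
  rw [hwa, hwb] at eA1
  rw [hwc, hwd] at eA2
  have eA : (6 * a) ^ n + (b ^ 2) ^ n + ((a ^ 2) ^ n + (6 * b) ^ n)
      = ∑ j ∈ range (n / 2 + 1),
          (2 * ((80 : ℤ) : Zsqrtd 5) ^ j * ((n.choose (2 * j) : ℤ) : Zsqrtd 5) * (a ^ 2) ^ (n - 2 * j)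
            + 2 * ((80 : ℤ) : Zsqrtd 5) ^ j * ((n.choose (2 * j) : ℤ) : Zsqrtd 5) * (b ^ 2) ^ (n - 2 * j)) := by
    rw [eA1, eA2, ← Finset.sum_add_distrib]
  have lhs_eq : (6 * a) ^ n + (b ^ 2) ^ n + ((a ^ 2) ^ n + (6 * b) ^ n)
      = (((6 : ℤ) ^ n * (2 ^ n * lucas n) + 2 ^ (2 * n) * lucas (2 * n) : ℤ) : Zsqrtd 5) := by
    have h6 : ((6 : Zsqrtd 5)) ^ n = (((6 : ℤ) ^ n : ℤ) : Zsqrtd 5) := by push_cast; ring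
    calc (6 * a) ^ n + (b ^ 2) ^ n + ((a ^ 2) ^ n + (6 * b) ^ n)
        = (6 : Zsqrtd 5) ^ n * (a ^ n + b ^ n) + (a ^ (2 * n) + b ^ (2 * n)) := by
          rw [mul_pow, mul_pow, ← pow_mul a 2 n, ← pow_mul b 2 n]; ring
      _ = _ := by rw [pow_add_pow n, pow_add_pow (2 * n), h6]; push_cast; ring
  have rhs_eq : ∀ j ∈ range (n / 2 + 1),
      (2 * ((80 : ℤ) : Zsqrtd 5) ^ j * ((n.choose (2 * j) : ℤ) : Zsqrtd 5) * (a ^ 2) ^ (n - 2 * j)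
        + 2 * ((80 : ℤ) : Zsqrtd 5) ^ j * ((n.choose (2 * j) : ℤ) : Zsqrtd 5) * (b ^ 2) ^ (n - 2 * j))
      = ((2 * 80 ^ j * (n.choose (2 * j) : ℤ) * (2 ^ (2 * (n - 2 * j)) * lucas (2 * (n - 2 * j))) : ℤ) : Zsqrtd 5) := by
    intro j hj
    have hab2 : (a ^ 2) ^ (n - 2 * j) + (b ^ 2) ^ (n - 2 * j)
        = a ^ (2 * (n - 2 * j)) + b ^ (2 * (n - 2 * j)) := by
      rw [pow_mul, pow_mul]
    calc (2 * ((80 : ℤ) : Zsqrtd 5) ^ j * ((n.choose (2 * j) : ℤ) : Zsqrtd 5) * (a ^ 2) ^ (n - 2 * j)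
        + 2 * ((80 : ℤ) : Zsqrtd 5) ^ j * ((n.choose (2 * j) : ℤ) : Zsqrtd 5) * (b ^ 2) ^ (n - 2 * j))
        = 2 * ((80 : ℤ) : Zsqrtd 5) ^ j * ((n.choose (2 * j) : ℤ) : Zsqrtd 5)
            * ((a ^ 2) ^ (n - 2 * j) + (b ^ 2) ^ (n - 2 * j)) := by ring
      _ = _ := by rw [hab2, pow_add_pow (2 * (n - 2 * j))]; push_cast; ring
  have hAz : ((6 : ℤ) ^ n * (2 ^ n * lucas n) + 2 ^ (2 * n) * lucas (2 * n) : ℤ)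
      = ∑ j ∈ range (n / 2 + 1),
          2 * 80 ^ j * (n.choose (2 * j) : ℤ) * (2 ^ (2 * (n - 2 * j)) * lucas (2 * (n - 2 * j))) := by
    apply (Int.cast_inj (α := Zsqrtd 5)).mp
    calc (((6 : ℤ) ^ n * (2 ^ n * lucas n) + 2 ^ (2 * n) * lucas (2 * n) : ℤ) : Zsqrtd 5)
        = (6 * a) ^ n + (b ^ 2) ^ n + ((a ^ 2) ^ n + (6 * b) ^ n) := lhs_eq.symm
      _ = _ := eA
      _ = ∑ j ∈ range (n / 2 + 1),
            ((2 * 80 ^ j * (n.choose (2 * j) : ℤ) * (2 ^ (2 * (n - 2 * j)) * lucas (2 * (n - 2 * j))) : ℤ) : Zsqrtd 5) :=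
          Finset.sum_congr rfl rhs_eq
      _ = _ := by rw [Int.cast_sum]
  have h2A : 2 * A = 3 ^ n * lucas n + lucas (2 * n) := by
    have h4 : ((2 : ℤ) ^ (2 * n)) ≠ 0 := by positivity
    apply mul_left_cancel₀ h4
    have hterm : ∀ j ∈ range (n / 2 + 1),
        2 * (80 : ℤ) ^ j * (n.choose (2 * j) : ℤ) * (2 ^ (2 * (n - 2 * j)) * lucas (2 * (n - 2 * j)))
          = 2 ^ (2 * n) * (2 * ((n.choose (2 * j) : ℤ) * 5 ^ j * lucas (2 * (n - 2 * j)))) := by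
      intro j hj
      have hj' : 2 * j ≤ n := by simp only [mem_range] at hj; omega
      have h80 : (80 : ℤ) ^ j = 5 ^ j * 2 ^ (4 * j) := by
        rw [show (80 : ℤ) = 5 * 2 ^ 4 by norm_num, mul_pow, ← pow_mul]
      have hpow : (2 : ℤ) ^ (4 * j) * 2 ^ (2 * (n - 2 * j)) = 2 ^ (2 * n) := by
        rw [← pow_add]; congr 1; omega
      calc 2 * (80 : ℤ) ^ j * (n.choose (2 * j) : ℤ) * (2 ^ (2 * (n - 2 * j)) * lucas (2 * (n - 2 * j)))
          = (2 ^ (4 * j) * 2 ^ (2 * (n - 2 * j)))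
              * (2 * ((n.choose (2 * j) : ℤ) * 5 ^ j * lucas (2 * (n - 2 * j)))) := by rw [h80]; ring
        _ = _ := by rw [hpow]
    have h62 : (6 : ℤ) ^ n = 3 ^ n * 2 ^ n := by rw [← mul_pow]; norm_num
    have h22 : (2 : ℤ) ^ (2 * n) = 2 ^ n * 2 ^ n := by rw [two_mul, pow_add]
    calc (2 : ℤ) ^ (2 * n) * (2 * A)
        = ∑ j ∈ range (n / 2 + 1),
            2 ^ (2 * n) * (2 * ((n.choose (2 * j) : ℤ) * 5 ^ j * lucas (2 * (n - 2 * j)))) := by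
          rw [hAdef, Finset.mul_sum, Finset.mul_sum]
      _ = ∑ j ∈ range (n / 2 + 1),
            2 * 80 ^ j * (n.choose (2 * j) : ℤ) * (2 ^ (2 * (n - 2 * j)) * lucas (2 * (n - 2 * j))) :=
          (Finset.sum_congr rfl hterm).symm
      _ = (6 : ℤ) ^ n * (2 ^ n * lucas n) + 2 ^ (2 * n) * lucas (2 * n) := hAz.symm
      _ = 2 ^ (2 * n) * (3 ^ n * lucas n + lucas (2 * n)) := by rw [h62, h22]; ring
  -- conclude
  rw [hS, pow_succ, pow_succ]
  linear_combination h2A + (-1 : ℤ) ^ n * 2 * hB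
end

section
/- Let a, b be elements of a commutative ring and let G_n be defined by the generating function ∑_{n≥0} G_n x^n = (2 − a x)/(1 − a x − b x^2), i.e., G_0 = 2, G_1 = a, and G_{n+2} = a G_{n+1} + b G_n. Then for all n ≥ 0, ∑_{k=0}^n C(n,k) G_k G_{n-k} = 2 a^n + 2^n G_n. -/
open Finset

private lemma pascal_split' {R : Type*} [CommRing R] (f : ℕ → R) (n : ℕ) :
    ∑ k ∈ Finset.range (n+2), ((n+1).choose k : R) * f k
      = ∑ k ∈ Finset.range (n+1), (n.choose k : R) * f k
      + ∑ k ∈ Finset.range (n+1), (n.choose k : R) * f (k+1) := by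
  have key : ∑ k ∈ Finset.range (n+1), (n.choose (k+1) : R) * f (k+1)
      + (n.choose 0 : R) * f 0
      = ∑ k ∈ Finset.range (n+1), (n.choose k : R) * f k := by
    rw [← Finset.sum_range_succ' (fun k => (n.choose k : R) * f k) (n+1),
      Finset.sum_range_succ]
    simp
  rw [Finset.sum_range_succ' _ (n+1)]
  have h1 : ∀ k ∈ Finset.range (n+1), ((n+1).choose (k+1) : R) * f (k+1)
      = (n.choose k : R) * f (k+1) + (n.choose (k+1) : R) * f (k+1) := by
    intro k _; rw [Nat.choose_succ_succ]; push_cast; ring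
  rw [Finset.sum_congr rfl h1, Finset.sum_add_distrib]
  simp only [Nat.choose_zero_right, Nat.cast_one, one_mul] at key ⊢
  linear_combination key

private lemma sym' {R : Type*} [CommRing R] (G : ℕ → R) (n : ℕ) :
    ∑ k ∈ Finset.range (n+1), (n.choose k : R) * G k * G (n-k+1)
      = ∑ k ∈ Finset.range (n+1), (n.choose k : R) * G (k+1) * G (n-k) := by
  rw [← Finset.sum_range_reflect]
  apply Finset.sum_congr rfl
  intro k hk
  have hk' : k ≤ n := by
    have := Finset.mem_range.mp hk; omega
  simp only [Nat.add_sub_cancel]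
  rw [Nat.choose_symm hk', Nat.sub_sub_self hk']
  ring

private lemma master {R : Type*} [CommRing R] (a b : R) (G : ℕ → R)
    (hG0 : G 0 = 2) (hG1 : G 1 = a)
    (hGrec : ∀ n, G (n + 2) = a * G (n + 1) + b * G n) : ∀ n : ℕ,
    (∑ k ∈ Finset.range (n+1), (n.choose k : R) * G k * G (n-k)
        = 2 * a ^ n + 2 ^ n * G n)
    ∧ (∑ k ∈ Finset.range (n+1), (n.choose k : R) * G (k+1) * G (n-k)
        = a ^ (n+1) + 2 ^ n * G (n+1))
    ∧ (∑ k ∈ Finset.range (n+1), (n.choose k : R) * G (k+1) * G (n-k+1)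
        = 2 ^ n * G (n+2) - 2 * b * a ^ n) := by
  intro n
  induction n with
  | zero =>
    refine ⟨?_, ?_, ?_⟩ <;> simp [hG0, hG1, hGrec 0] <;> ring
  | succ n ih =>
    obtain ⟨hS, hT, hU⟩ := ih
    -- useful pointwise rewrites for natural subtraction
    have sub1 : ∀ k ∈ Finset.range (n+1), (n.choose k : R) * G k * G (n+1-k)
        = (n.choose k : R) * G k * G (n-k+1) := by
      intro k hk
      have hk' : k ≤ n := by have := Finset.mem_range.mp hk; omega
      rw [Nat.succ_sub hk']
    have sub2 : ∀ k ∈ Finset.range (n+1), (n.choose k : R) * G (k+1) * G (n+1-k)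
        = (n.choose k : R) * G (k+1) * G (n-k+1) := by
      intro k hk
      have hk' : k ≤ n := by have := Finset.mem_range.mp hk; omega
      rw [Nat.succ_sub hk']
    -- S (n+1)
    have hSnew : ∑ k ∈ Finset.range (n+2), ((n+1).choose k : R) * G k * G (n+1-k)
        = 2 * a ^ (n+1) + 2 ^ (n+1) * G (n+1) := by
      have := pascal_split' (fun k => G k * G (n+1-k)) n
      simp only [← mul_assoc] at this
      rw [this]
      rw [Finset.sum_congr rfl sub1, sym' G n]
      have e2 : ∑ k ∈ Finset.range (n+1), (n.choose k : R) * G (k+1) * G (n+1-(k+1))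
          = ∑ k ∈ Finset.range (n+1), (n.choose k : R) * G (k+1) * G (n-k) := by
        apply Finset.sum_congr rfl
        intro k hk
        congr 2
        omega
      rw [e2, hT]
      ring
    -- T (n+1)
    have hTnew : ∑ k ∈ Finset.range (n+2), ((n+1).choose k : R) * G (k+1) * G (n+1-k)
        = a ^ (n+2) + 2 ^ (n+1) * G (n+2) := by
      have := pascal_split' (fun k => G (k+1) * G (n+1-k)) n
      simp only [← mul_assoc] at this
      rw [this]
      rw [Finset.sum_congr rfl sub2, hU]
      have e2 : ∑ k ∈ Finset.range (n+1), (n.choose k : R) * G (k+1+1) * G (n+1-(k+1))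
          = a * (∑ k ∈ Finset.range (n+1), (n.choose k : R) * G (k+1) * G (n-k))
          + b * (∑ k ∈ Finset.range (n+1), (n.choose k : R) * G k * G (n-k)) := by
        rw [Finset.mul_sum, Finset.mul_sum, ← Finset.sum_add_distrib]
        apply Finset.sum_congr rfl
        intro k hk
        have h3 : n+1-(k+1) = n-k := by omega
        rw [h3, hGrec k]
        ring
      rw [e2, hT, hS, hGrec n]
      ring
    -- U (n+1)
    have hUnew : ∑ k ∈ Finset.range (n+2), ((n+1).choose k : R) * G (k+1) * G (n+1-k+1)
        = 2 ^ (n+1) * G (n+3) - 2 * b * a ^ (n+1) := by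
      have := pascal_split' (fun k => G (k+1) * G (n+1-k+1)) n
      simp only [← mul_assoc] at this
      rw [this]
      have e1 : ∑ k ∈ Finset.range (n+1), (n.choose k : R) * G (k+1) * G (n+1-k+1)
          = a * (∑ k ∈ Finset.range (n+1), (n.choose k : R) * G (k+1) * G (n-k+1))
          + b * (∑ k ∈ Finset.range (n+1), (n.choose k : R) * G (k+1) * G (n-k)) := by
        rw [Finset.mul_sum, Finset.mul_sum, ← Finset.sum_add_distrib]
        apply Finset.sum_congr rfl
        intro k hk
        have hk' : k ≤ n := by have := Finset.mem_range.mp hk; omega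
        have h3 : n+1-k+1 = (n-k)+2 := by omega
        rw [h3, hGrec (n-k)]
        ring
      have e2 : ∑ k ∈ Finset.range (n+1), (n.choose k : R) * G (k+1+1) * G (n+1-(k+1)+1)
          = a * (∑ k ∈ Finset.range (n+1), (n.choose k : R) * G (k+1) * G (n-k+1))
          + b * (∑ k ∈ Finset.range (n+1), (n.choose k : R) * G k * G (n-k+1)) := by
        rw [Finset.mul_sum, Finset.mul_sum, ← Finset.sum_add_distrib]
        apply Finset.sum_congr rfl
        intro k hk
        have h3 : n+1-(k+1) = n-k := by omega
        rw [h3, hGrec k]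
        ring
      rw [e1, e2, sym' G n, hU, hT]
      have : G (n+3) = a * G (n+2) + b * G (n+1) := hGrec (n+1)
      rw [this]
      ring
    exact ⟨hSnew, hTnew, hUnew⟩

theorem binomial_conv_second_order {R : Type*} [CommRing R] (a b : R) (G : ℕ → R)
    (hG0 : G 0 = 2) (hG1 : G 1 = a)
    (hGrec : ∀ n, G (n + 2) = a * G (n + 1) + b * G n) (n : ℕ) :
    ∑ k ∈ Finset.range (n + 1), (n.choose k : R) * G k * G (n - k) =
      2 * a ^ n + 2 ^ n * G n := by
  exact (master a b G hG0 hG1 hGrec n).1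
end

section
/- For all n ≥ 0, ∑_{k=0}^n C(n,k) P_k P_{n-k} = (2^n + 2·(−1)^n) P_n, where P_n are the Perrin numbers. -/
/-- The Perrin numbers: `P 0 = 3`, `P 1 = 0`, `P 2 = 2`, `P n = P (n-2) + P (n-3)`. -/
def perrin : ℕ → ℤ
  | 0 => 3
  | 1 => 0
  | 2 => 2
  | n + 3 => perrin (n + 1) + perrin n

lemma exists_roots : ∃ a b c : ℂ, a + b + c = 0 ∧ a ^ 3 = a + 1 ∧ b ^ 3 = b + 1 ∧
    c ^ 3 = c + 1 ∧ a ^ 2 + b ^ 2 + c ^ 2 = 2 := by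
  obtain ⟨a, ha⟩ : ∃ a : ℂ, (Polynomial.X ^ 3 - Polynomial.X - 1 : Polynomial ℂ).IsRoot a := by
    apply Complex.exists_root
    have : (Polynomial.X ^ 3 - Polynomial.X - 1 : Polynomial ℂ).degree = 3 := by
      compute_degree!
    rw [this]; norm_num
  have ha' : a ^ 3 = a + 1 := by
    have h := ha
    simp only [Polynomial.IsRoot, Polynomial.eval_sub, Polynomial.eval_pow,
      Polynomial.eval_X, Polynomial.eval_one] at h
    linear_combination h
  obtain ⟨d, hd⟩ : ∃ d : ℂ, d ^ 2 = 4 - 3 * a ^ 2 :=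
    IsAlgClosed.exists_pow_nat_eq _ (n := 2) (by norm_num)
  refine ⟨a, (-a + d) / 2, (-a - d) / 2, by ring, ha', ?_, ?_, ?_⟩
  · linear_combination ha' + ((d - 3 * a) / 8) * hd
  · linear_combination ha' + ((-d - 3 * a) / 8) * hd
  · linear_combination hd / 2

lemma perrin_eq (a b c : ℂ) (ha : a ^ 3 = a + 1) (hb : b ^ 3 = b + 1) (hc : c ^ 3 = c + 1)
    (h1 : a + b + c = 0) (h2 : a ^ 2 + b ^ 2 + c ^ 2 = 2) :
    ∀ n : ℕ, (perrin n : ℂ) = a ^ n + b ^ n + c ^ n := by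
  have key : ∀ n : ℕ, (perrin n : ℂ) = a ^ n + b ^ n + c ^ n ∧
      (perrin (n + 1) : ℂ) = a ^ (n + 1) + b ^ (n + 1) + c ^ (n + 1) ∧
      (perrin (n + 2) : ℂ) = a ^ (n + 2) + b ^ (n + 2) + c ^ (n + 2) := by
    intro n
    induction n with
    | zero =>
      refine ⟨by norm_num [perrin], by norm_num [perrin]; linear_combination -h1,
        by norm_num [perrin]; linear_combination -h2⟩
    | succ m ih =>
      obtain ⟨i0, i1, i2⟩ := ih
      refine ⟨i1, i2, ?_⟩
      show (perrin (m + 3) : ℂ) = _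
      rw [perrin]
      push_cast
      rw [i0, i1]
      linear_combination (-(a ^ m)) * ha + (-(b ^ m)) * hb + (-(c ^ m)) * hc
  exact fun n => (key n).1

theorem binomial_conv_perrin (n : ℕ) :
    ∑ k ∈ Finset.range (n + 1), (n.choose k : ℤ) * perrin k * perrin (n - k) =
      (2 ^ n + 2 * (-1) ^ n) * perrin n := by
  obtain ⟨a, b, c, h1, ha, hb, hc, h2⟩ := exists_roots
  have hp := perrin_eq a b c ha hb hc h1 h2
  have cast_inj : Function.Injective (Int.cast : ℤ → ℂ) := Int.cast_injective
  apply cast_inj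
  push_cast
  have key : ∀ x y : ℂ, ∑ k ∈ Finset.range (n + 1), (n.choose k : ℂ) * x ^ k * y ^ (n - k)
      = (x + y) ^ n := by
    intro x y
    rw [add_pow]
    exact Finset.sum_congr rfl fun k _ => by ring
  calc ∑ k ∈ Finset.range (n + 1), (n.choose k : ℂ) * (perrin k : ℂ) * (perrin (n - k) : ℂ)
      = ∑ k ∈ Finset.range (n + 1),
        ((n.choose k : ℂ) * a ^ k * a ^ (n - k) + (n.choose k : ℂ) * a ^ k * b ^ (n - k)
        + (n.choose k : ℂ) * a ^ k * c ^ (n - k) + (n.choose k : ℂ) * b ^ k * a ^ (n - k)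
        + (n.choose k : ℂ) * b ^ k * b ^ (n - k) + (n.choose k : ℂ) * b ^ k * c ^ (n - k)
        + (n.choose k : ℂ) * c ^ k * a ^ (n - k) + (n.choose k : ℂ) * c ^ k * b ^ (n - k)
        + (n.choose k : ℂ) * c ^ k * c ^ (n - k)) := by
        refine Finset.sum_congr rfl fun k _ => ?_
        rw [hp k, hp (n - k)]; ring
    _ = (a + a) ^ n + (a + b) ^ n + (a + c) ^ n + (b + a) ^ n + (b + b) ^ n + (b + c) ^ n
        + (c + a) ^ n + (c + b) ^ n + (c + c) ^ n := by
        simp only [Finset.sum_add_distrib, key]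
    _ = (2 ^ n + 2 * (-1) ^ n) * (perrin n : ℂ) := by
        rw [hp n]
        have e1 : a + b = -c := by linear_combination h1
        have e2 : a + c = -b := by linear_combination h1
        have e3 : b + c = -a := by linear_combination h1
        rw [show b + a = -c by linear_combination h1, show c + a = -b by linear_combination h1,
          show c + b = -a by linear_combination h1, e1, e2, e3,
          show a + a = 2 * a by ring, show b + b = 2 * b by ring, show c + c = 2 * c by ring,
          mul_pow, mul_pow, mul_pow, neg_pow, neg_pow, neg_pow]
        ring
end

section
/- As formal power series over ℚ, (x/(1−x−x²)) ⊙ (x/(1−2x−x²)) = (2x² − 3x³)/(1 − 6x + 7x² + 6x³ − 9x⁴), where ⊙ denotes the binomial product defined by (∑ aₙxⁿ) ⊙ (∑ bₙxⁿ) = ∑ cₙxⁿ with cₙ = ∑_{k=0}^n C(n,k) aₖ b_{n−k}. -/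
open PowerSeries Finset

/-- The binomial product of two formal power series:
`(∑ aₙ xⁿ) ⊙ (∑ bₙ xⁿ) = ∑ cₙ xⁿ` where `cₙ = ∑ₖ C(n,k) aₖ b_{n-k}`. -/
noncomputable def binProd {R : Type*} [CommSemiring R] (A B : PowerSeries R) :
    PowerSeries R :=
  PowerSeries.mk fun n =>
    ∑ k ∈ range (n + 1), (n.choose k : R) * coeff k A * coeff (n - k) B

private lemma quartic_factor (r s : ℝ) (hs : s^2 = 5) :
    r^4 - 6*r^3 + 7*r^2 + 6*r - 9
      = ((r-(1+s)/2-1)^2-2)*((r-(1-s)/2-1)^2-2) := by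
  linear_combination (-s^2/16 + r^2/2 - 3*r/2 + 29/16) * hs

private lemma root_rec (s t : ℝ) (hs : s^2 = 5) (ht : t^2 = 2) :
    ((1+s)/2+1+t)^4 = 6*((1+s)/2+1+t)^3 - 7*((1+s)/2+1+t)^2 - 6*((1+s)/2+1+t) + 9 := by
  have h := quartic_factor ((1+s)/2+1+t) s hs
  have h1 : (((1+s)/2+1+t)-(1+s)/2-1)^2 - 2 = 0 := by linear_combination ht
  rw [h1, zero_mul] at h
  linarith

private lemma root_rec_pow (r : ℝ) (hr : r^4 = 6*r^3 - 7*r^2 - 6*r + 9) (n : ℕ) :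
    r^(n+4) = 6*r^(n+3) - 7*r^(n+2) - 6*r^(n+1) + 9*r^n := by
  have e : ∀ k : ℕ, r^(n+k) = r^n * r^k := fun k => pow_add r n k
  rw [e 4, e 3, e 2, e 1, hr]; ring

private lemma ext_two_step (x y : ℕ → ℝ) (u v : ℝ) (h0 : x 0 = y 0) (h1 : x 1 = y 1)
    (hx : ∀ n, x (n+2) = u * x (n+1) + v * x n)
    (hy : ∀ n, y (n+2) = u * y (n+1) + v * y n) : ∀ n, x n = y n := by
  intro n
  induction n using Nat.strong_induction_on with
  | _ n ih =>
    match n with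
    | 0 => exact h0
    | 1 => exact h1
    | n+2 => rw [hx, hy, ih (n+1) (by omega), ih n (by omega)]

private lemma coeff_comb4 (S : PowerSeries ℚ) (m : ℕ) :
    coeff m ((1 - 6*X + 7*X^2 + 6*X^3 - 9*X^4) * S) =
      coeff m S - 6 * (if 1 ≤ m then coeff (m-1) S else 0)
        + 7 * (if 2 ≤ m then coeff (m-2) S else 0)
        + 6 * (if 3 ≤ m then coeff (m-3) S else 0)
        - 9 * (if 4 ≤ m then coeff (m-4) S else 0) := by
  have c6 : C (R := ℚ) 6 = 6 := map_ofNat _ 6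
  have c7 : C (R := ℚ) 7 = 7 := map_ofNat _ 7
  have c9 : C (R := ℚ) 9 = 9 := map_ofNat _ 9
  have h : (1 - 6*X + 7*X^2 + 6*X^3 - 9*X^4) * S =
      S - C 6 * (X^1*S) + C 7 * (X^2*S) + C 6 * (X^3*S) - C 9 * (X^4*S) := by
    rw [c6, c7, c9]; ring
  rw [h]
  simp only [map_sub, map_add, coeff_C_mul, coeff_X_pow_mul']

private lemma rhs_coeff (m : ℕ) :
    coeff m (2 * X^2 - 3 * X^3 : PowerSeries ℚ)
      = (if m = 2 then 2 else 0) - (if m = 3 then 3 else 0) := by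
  have h : (2 * X^2 - 3 * X^3 : PowerSeries ℚ) = C 2 * X^2 - C 3 * X^3 := by
    rw [map_ofNat, map_ofNat]
  rw [h, map_sub, coeff_C_mul, coeff_C_mul, coeff_X_pow, coeff_X_pow]
  split_ifs <;> ring

private lemma coeff_comb2 (u : ℚ) (S : PowerSeries ℚ) (n : ℕ) :
    coeff (n+2) ((1 - C u * X - X^2) * S) =
      coeff (n+2) S - u * coeff (n+1) S - coeff n S := by
  have h : (1 - C u * X - X^2) * S = S - C u * (X^1*S) - X^2*S := by ring
  rw [h]
  simp only [map_sub, coeff_C_mul]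
  rw [show n+2 = (n+1)+1 by omega, coeff_X_pow_mul,
      show (n+1)+1 = n+2 by omega, coeff_X_pow_mul]

theorem binProd_fib_pell (A B : PowerSeries ℚ)
    (hA : (1 - X - X ^ 2) * A = X) (hB : (1 - 2 * X - X ^ 2) * B = X) :
    (1 - 6 * X + 7 * X ^ 2 + 6 * X ^ 3 - 9 * X ^ 4) * binProd A B =
      2 * X ^ 2 - 3 * X ^ 3 := by
  set a : ℕ → ℚ := fun n => coeff n A with ha
  set b : ℕ → ℚ := fun n => coeff n B with hb
  have hA' : (1 - C 1 * X - X^2) * A = X := by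
    rw [map_one, one_mul]; exact hA
  have hB' : (1 - C 2 * X - X^2) * B = X := by
    rw [show C (R := ℚ) 2 = 2 from map_ofNat _ 2]; exact hB
  -- initial values
  have ca0 : constantCoeff A = 0 := by simpa using congrArg (constantCoeff) hA
  have cb0 : constantCoeff B = 0 := by simpa using congrArg (constantCoeff) hB
  have ha0 : a 0 = 0 := by simpa [ha, coeff_zero_eq_constantCoeff] using ca0
  have hb0 : b 0 = 0 := by simpa [hb, coeff_zero_eq_constantCoeff] using cb0
  have ha1 : a 1 = 1 := by
    have := congrArg (coeff 1) hA
    rw [coeff_mul] at this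
    simpa [Finset.Nat.sum_antidiagonal_eq_sum_range_succ_mk, Finset.sum_range_succ,
      ca0, coeff_X_pow, ha] using this
  have hb1 : b 1 = 1 := by
    have := congrArg (coeff 1) hB
    rw [coeff_mul] at this
    simpa [Finset.Nat.sum_antidiagonal_eq_sum_range_succ_mk, Finset.sum_range_succ,
      cb0, coeff_X_pow, map_ofNat, hb] using this
  -- recurrences
  have haR : ∀ n, a (n+2) = a (n+1) + a n := by
    intro n
    have h := congrArg (coeff (n+2)) hA'
    rw [coeff_comb2] at h
    have hx : coeff (n+2) (X : PowerSeries ℚ) = 0 := by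
      rw [coeff_X]; simp
    rw [hx] at h
    have h' : a (n+2) - 1 * a (n+1) - a n = 0 := h
    linarith
  have hbR : ∀ n, b (n+2) = 2 * b (n+1) + b n := by
    intro n
    have h := congrArg (coeff (n+2)) hB'
    rw [coeff_comb2] at h
    have hx : coeff (n+2) (X : PowerSeries ℚ) = 0 := by
      rw [coeff_X]; simp
    rw [hx] at h
    have h' : b (n+2) - 2 * b (n+1) - b n = 0 := h
    linarith
  -- real closed forms
  set s : ℝ := Real.sqrt 5 with hsdef
  set t : ℝ := Real.sqrt 2 with htdef
  have hs : s^2 = 5 := Real.sq_sqrt (by norm_num)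
  have ht : t^2 = 2 := Real.sq_sqrt (by norm_num)
  have hs0 : s ≠ 0 := by positivity
  have ht0 : t ≠ 0 := by positivity
  set φ : ℝ := (1+s)/2 with hφdef
  set ψ : ℝ := (1-s)/2 with hψdef
  set u : ℝ := 1+t with hudef
  set v : ℝ := 1-t with hvdef
  have haC : ∀ n, ((a n : ℝ)) = (φ^n - ψ^n)/s := by
    apply ext_two_step (fun n => (a n : ℝ)) _ 1 1
    · simp [ha0]
    · have hd : φ - ψ = s := by rw [hφdef, hψdef]; ring
      simp only [ha1, pow_one, hd]
      rw [div_self hs0]; norm_num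
    · intro n; push_cast [haR n]; ring
    · intro n
      have hφ2 : φ^(n+2) = φ^(n+1) + φ^n := by
        have h2 : φ*φ = φ + 1 := by rw [hφdef]; linear_combination hs/4
        rw [pow_succ, pow_succ]
        linear_combination (φ^n) * h2
      have hψ2 : ψ^(n+2) = ψ^(n+1) + ψ^n := by
        have h2 : ψ*ψ = ψ + 1 := by rw [hψdef]; linear_combination hs/4
        rw [pow_succ, pow_succ]
        linear_combination (ψ^n) * h2
      rw [hφ2, hψ2]; ring
  have hbC : ∀ n, ((b n : ℝ)) = (u^n - v^n)/(2*t) := by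
    apply ext_two_step (fun n => (b n : ℝ)) _ 2 1
    · simp [hb0]
    · have hd : u - v = 2*t := by rw [hudef, hvdef]; ring
      simp only [hb1, pow_one, hd]
      rw [div_self (by simpa using ht0)]
      norm_num
    · intro n; push_cast [hbR n]; ring
    · intro n
      have hu2 : u^(n+2) = 2*u^(n+1) + u^n := by
        have h2 : u*u = 2*u + 1 := by rw [hudef]; linear_combination ht
        rw [pow_succ, pow_succ]
        linear_combination (u^n) * h2
      have hv2 : v^(n+2) = 2*v^(n+1) + v^n := by
        have h2 : v*v = 2*v + 1 := by rw [hvdef]; linear_combination ht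
        rw [pow_succ, pow_succ]
        linear_combination (v^n) * h2
      rw [hu2, hv2]; ring
  -- the binomial convolution sequence
  set c : ℕ → ℚ := fun n => ∑ k ∈ range (n+1), (n.choose k : ℚ) * a k * b (n-k) with hc
  have hcoeffC : ∀ n, coeff n (binProd A B) = c n := by
    intro n; simp [binProd, hc, ha, hb, coeff_mk]
  have hcC : ∀ n, (2*s*t) * (c n : ℝ)
      = (φ+u)^n - (ψ+u)^n - (φ+v)^n + (ψ+v)^n := by
    intro n
    have hsum : ((c n : ℝ)) = ∑ k ∈ range (n+1),
        (n.choose k : ℝ) * ((φ^k - ψ^k)/s) * ((u^(n-k) - v^(n-k))/(2*t)) := by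
      rw [hc]; push_cast
      refine Finset.sum_congr rfl fun k hk => ?_
      rw [haC k, hbC (n-k)]
    rw [hsum, Finset.mul_sum, add_pow, add_pow, add_pow, add_pow]
    rw [← Finset.sum_sub_distrib, ← Finset.sum_sub_distrib, ← Finset.sum_add_distrib]
    refine Finset.sum_congr rfl fun k hk => ?_
    field_simp
    ring
  -- the order-4 recurrence for c
  have hcR : ∀ n, c (n+4) = 6 * c (n+3) - 7 * c (n+2) - 6 * c (n+1) + 9 * c n := by
    intro n
    have hstn : (2*s*t) ≠ 0 := by positivity
    have r1 : (φ+u)^4 = 6*(φ+u)^3 - 7*(φ+u)^2 - 6*(φ+u) + 9 := by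
      have h := root_rec s t hs ht
      rw [hφdef, hudef]
      convert h using 2 <;> ring
    have r2 : (ψ+u)^4 = 6*(ψ+u)^3 - 7*(ψ+u)^2 - 6*(ψ+u) + 9 := by
      have h := root_rec (-s) t (by rw [neg_pow]; simp [hs]) ht
      rw [hψdef, hudef]
      convert h using 2 <;> ring
    have r3 : (φ+v)^4 = 6*(φ+v)^3 - 7*(φ+v)^2 - 6*(φ+v) + 9 := by
      have h := root_rec s (-t) hs (by rw [neg_pow]; simp [ht])
      rw [hφdef, hvdef]
      convert h using 2 <;> ring
    have r4 : (ψ+v)^4 = 6*(ψ+v)^3 - 7*(ψ+v)^2 - 6*(ψ+v) + 9 := by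
      have h := root_rec (-s) (-t) (by rw [neg_pow]; simp [hs]) (by rw [neg_pow]; simp [ht])
      rw [hψdef, hvdef]
      convert h using 2 <;> ring
    have key : (2*s*t) * ((c (n+4) : ℝ))
        = (2*s*t) * (6 * (c (n+3):ℝ) - 7 * (c (n+2):ℝ) - 6 * (c (n+1):ℝ) + 9 * (c n:ℝ)) := by
      have k4 := hcC (n+4)
      rw [root_rec_pow _ r1 n, root_rec_pow _ r2 n, root_rec_pow _ r3 n,
        root_rec_pow _ r4 n] at k4
      linear_combination k4 - 6 * hcC (n+3) + 7 * hcC (n+2) + 6 * hcC (n+1) - 9 * hcC n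
    have hq := mul_left_cancel₀ hstn key
    exact_mod_cast hq
  -- small values
  have ha2 : a 2 = 1 := by rw [haR 0, ha0, ha1]; norm_num
  have hb2 : b 2 = 2 := by rw [hbR 0, hb0, hb1]; norm_num
  have hc0 : c 0 = 0 := by simp [hc, ha0]
  have hc1 : c 1 = 0 := by
    simp [hc, Finset.sum_range_succ, ha0, hb0]
  have hc2 : c 2 = 2 := by
    simp [hc, Finset.sum_range_succ, ha0, hb0, ha1, hb1]
  have hc3 : c 3 = 9 := by
    simp [hc, Finset.sum_range_succ, ha0, hb0, ha1, hb1, ha2, hb2]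
    norm_num
  -- assemble
  ext m
  rw [coeff_comb4, rhs_coeff, hcoeffC]
  match m with
  | 0 => norm_num [hc0]
  | 1 => norm_num [hcoeffC, hc0, hc1]
  | 2 => norm_num [hcoeffC, hc0, hc1, hc2]
  | 3 => norm_num [hcoeffC, hc0, hc1, hc2, hc3]
  | (n+4) =>
    have e1 : n+4-1 = n+3 := by omega
    have e2 : n+4-2 = n+2 := by omega
    have e3 : n+4-3 = n+1 := by omega
    have e4 : n+4-4 = n := by omega
    rw [if_pos (by omega), if_pos (by omega), if_pos (by omega), if_pos (by omega),
      e1, e2, e3, e4, hcoeffC, hcoeffC, hcoeffC, hcoeffC, hcR n,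
      if_neg (by omega), if_neg (by omega)]
    ring
end

section
/- For any formal power series A(x) over a commutative ring and any element β, A(x) ⊙ (1/(1−βx)) = (1/(1−βx))·A(x/(1−βx)), where ⊙ denotes the binomial product. Equivalently, the coefficient of xⁿ in (1/(1−βx))·A(x/(1−βx)) equals ∑_{k=0}^n C(n,k) β^{n−k} a_k where a_k are the coefficients of A. -/
open PowerSeries Finset

private lemma coeff_gs_pow {R : Type*} [CommRing R] (β : R) (k n : ℕ) :
    coeff n ((PowerSeries.mk fun n => β ^ n) ^ (k + 1)) = ((n + k).choose k : R) * β ^ n := by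
  induction k generalizing n with
  | zero => simp
  | succ k ih =>
    rw [pow_succ, coeff_mul, Finset.Nat.sum_antidiagonal_eq_sum_range_succ_mk]
    simp only [ih, coeff_mk]
    have h1 : ∀ i ∈ range (n + 1),
        ((i + k).choose k : R) * β ^ i * β ^ (n - i) = ((i + k).choose k : R) * β ^ n := by
      intro i hi
      rw [mul_assoc, ← pow_add, Nat.add_sub_cancel' (Nat.lt_succ_iff.mp (mem_range.mp hi))]
    rw [sum_congr rfl h1, ← sum_mul, ← Nat.cast_sum, Nat.sum_range_add_choose, ← add_assoc]

private lemma coeff_XG_pow {R : Type*} [CommRing R] (β : R) (k n : ℕ) :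
    coeff n ((X * PowerSeries.mk fun n => β ^ n) ^ (k + 1)) =
      if k + 1 ≤ n then ((n - 1).choose k : R) * β ^ (n - (k + 1)) else 0 := by
  rw [mul_pow, coeff_X_pow_mul']
  split_ifs with h
  · rw [coeff_gs_pow]
    have h2 : n - (k + 1) + k = n - 1 := by omega
    rw [h2]
  · rfl

/-- Composition `A (B(x))` of formal power series, for `B` with zero constant term. -/
noncomputable def psComp {R : Type*} [CommSemiring R] (A B : PowerSeries R) :
    PowerSeries R :=
  PowerSeries.mk fun n =>
    ∑ k ∈ range (n + 1), coeff k A * coeff n (B ^ k)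

private lemma coeff_main {R : Type*} [CommRing R] (A : PowerSeries R) (β : R) (n : ℕ) :
    coeff n ((PowerSeries.mk fun n => β ^ n) *
        psComp A (X * PowerSeries.mk fun n => β ^ n)) =
      ∑ k ∈ range (n + 1), (n.choose k : R) * β ^ (n - k) * coeff k A := by
  set G : PowerSeries R := PowerSeries.mk fun n => β ^ n with hG
  rw [coeff_mul, Finset.Nat.sum_antidiagonal_eq_sum_range_succ_mk]
  have hc : ∀ i ∈ range (n + 1), coeff i G * coeff (n - i) (psComp A (X * G)) =
      ∑ k ∈ range (n + 1), β ^ i * (coeff k A * coeff (n - i) ((X * G) ^ k)) := by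
    intro i hi
    simp only [mem_range] at hi
    have hext : ∑ k ∈ range (n - i + 1), coeff k A * coeff (n - i) ((X * G) ^ k) =
        ∑ k ∈ range (n + 1), coeff k A * coeff (n - i) ((X * G) ^ k) := by
      refine Finset.sum_subset (Finset.range_subset_range.mpr (by omega)) fun x hx hx2 => ?_
      simp only [mem_range] at hx hx2
      rcases x with _ | x'
      · omega
      · rw [coeff_XG_pow, if_neg (by omega), mul_zero]
    rw [hG]
    simp only [psComp, coeff_mk]
    rw [← hG, hext, mul_sum]
  rw [sum_congr rfl hc, Finset.sum_comm]
  refine sum_congr rfl fun k hk => ?_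
  have hkn : k < n + 1 := mem_range.mp hk
  cases k with
  | zero =>
    rw [Finset.sum_eq_single_of_mem n (self_mem_range_succ n) ?side]
    · simp
    case side =>
      intro b hb hbn
      simp only [mem_range] at hb
      have hnb : n - b ≠ 0 := by omega
      simp [pow_zero, coeff_one, hnb]
  | succ k' =>
    have hkn' : k' + 1 ≤ n := by omega
    have h1 : ∀ i ∈ range (n + 1),
        β ^ i * (coeff (k' + 1) A * coeff (n - i) ((X * G) ^ (k' + 1))) =
        coeff (k' + 1) A *
          (if i ≤ n - (k' + 1) then ((n - 1 - i).choose k' : R) * β ^ (n - (k' + 1)) else 0) := by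
      intro i hi
      simp only [mem_range] at hi
      rw [coeff_XG_pow]
      by_cases h : k' + 1 ≤ n - i
      · rw [if_pos h, if_pos (by omega)]
        have e1 : n - i - 1 = n - 1 - i := by omega
        have e2 : β ^ i * β ^ (n - i - (k' + 1)) = β ^ (n - (k' + 1)) := by
          rw [← pow_add]; congr 1; omega
        rw [e1, ← e2]; ring
      · rw [if_neg h, if_neg (by omega)]; ring
    rw [sum_congr rfl h1, ← mul_sum]
    have h2 : ∑ i ∈ range (n + 1),
        (if i ≤ n - (k' + 1) then ((n - 1 - i).choose k' : R) * β ^ (n - (k' + 1)) else 0) =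
        (n.choose (k' + 1) : R) * β ^ (n - (k' + 1)) := by
      rw [← Finset.sum_subset (Finset.range_subset_range.mpr (show n - k' ≤ n + 1 by omega))
        (fun x hx hx2 => if_neg (by simp only [mem_range] at hx hx2; omega))]
      refine (Finset.sum_congr rfl fun i hi =>
        if_pos (by simp only [mem_range] at hi; omega)).trans ?_
      rw [← sum_mul]
      congr 1
      rw [← Nat.cast_sum]
      congr 1
      have hre : ∀ i ∈ range (n - k'), (n - 1 - i).choose k' = ((n - k' - 1 - i) + k').choose k' := by
        intro i hi; simp only [mem_range] at hi; congr 1; omega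
      rw [Finset.sum_congr rfl hre, Finset.sum_range_reflect (fun j => (j + k').choose k') (n - k'),
        show n - k' = (n - (k' + 1)) + 1 by omega, Nat.sum_range_add_choose]
      congr 1
      omega
    rw [h2]; ring

theorem binProd_geometric {R : Type*} [CommRing R] (A : PowerSeries R) (β : R) :
    binProd A (PowerSeries.mk fun n => β ^ n) =
        (PowerSeries.mk fun n => β ^ n) *
          psComp A (X * PowerSeries.mk fun n => β ^ n) ∧
      ∀ n : ℕ,
        coeff n
            ((PowerSeries.mk fun n => β ^ n) *
              psComp A (X * PowerSeries.mk fun n => β ^ n)) =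
          ∑ k ∈ range (n + 1), (n.choose k : R) * β ^ (n - k) * coeff k A := by
  refine ⟨?_, coeff_main A β⟩
  ext n
  rw [coeff_main]
  simp only [binProd, coeff_mk]
  exact sum_congr rfl fun k hk => by ring
end

section
/- For all nonnegative integers j, k and elements α, β of a field of characteristic 0, x^j/(1−αx)^{j+1} ⊙ x^k/(1−βx)^{k+1} = C(j+k,j)·x^{j+k}/(1−(α+β)x)^{j+k+1}, as formal power series, where ⊙ is the binomial product. -/
open PowerSeries Finset

lemma key_nat (n j k i : ℕ) (h : j + k + i ≤ n) :
    n.choose (j + i) * (j + i).choose j * ((n - (j + i)).choose k)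
      = (j + k).choose j * (n.choose (j + k) * ((n - (j + k)).choose i)) := by
  have h1 : n.choose (j + i) * (j + i).choose j = n.choose j * (n - j).choose i := by
    rw [Nat.choose_mul (by omega), Nat.add_sub_cancel_left]
  have h2 : (n - j).choose (i + k) * (i + k).choose i
      = (n - j).choose i * (n - (j + i)).choose k := by
    rw [Nat.choose_mul (by omega), Nat.add_sub_cancel_left]
    congr 2
    omega
  have h3 : n.choose (j + k) * (j + k).choose j = n.choose j * (n - j).choose k := by
    rw [Nat.choose_mul (by omega), Nat.add_sub_cancel_left]
  have h4 : (n - j).choose (k + i) * (k + i).choose k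
      = (n - j).choose k * (n - (j + k)).choose i := by
    rw [Nat.choose_mul (by omega), Nat.add_sub_cancel_left]
    congr 2
    omega
  have h5 : (i + k).choose i = (k + i).choose k := by
    rw [Nat.add_comm i k, Nat.choose_symm_add]
  calc n.choose (j + i) * (j + i).choose j * ((n - (j + i)).choose k)
      = n.choose j * ((n - j).choose i * (n - (j + i)).choose k) := by rw [h1]; ring
    _ = n.choose j * ((n - j).choose (i + k) * (i + k).choose i) := by rw [h2]
    _ = n.choose j * ((n - j).choose (k + i) * (k + i).choose k) := by rw [h5, Nat.add_comm i k]
    _ = n.choose j * ((n - j).choose k * (n - (j + k)).choose i) := by rw [h4]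
    _ = (j + k).choose j * (n.choose (j + k) * ((n - (j + k)).choose i)) := by
        rw [← Nat.mul_assoc, ← h3]; ring

/-- `x^j/(1-αx)^(j+1) ⊙ x^k/(1-βx)^(k+1) = C(j+k,j) x^(j+k)/(1-(α+β)x)^(j+k+1)`,
where `x^j/(1-αx)^(j+1) = ∑ₙ C(n,j) α^(n-j) xⁿ`. -/
theorem binProd_basic {F : Type*} [Field F] [CharZero F] (j k : ℕ) (α β : F) :
    binProd (PowerSeries.mk fun n => (n.choose j : F) * α ^ (n - j))
        (PowerSeries.mk fun n => (n.choose k : F) * β ^ (n - k)) =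
      PowerSeries.mk fun n =>
        ((j + k).choose j : F) * ((n.choose (j + k) : F) * (α + β) ^ (n - (j + k))) := by
  ext n
  simp only [binProd, coeff_mk]
  by_cases h : j + k ≤ n
  · -- expand (α+β)^(n-(j+k)) by the binomial theorem
    rw [add_pow]
    rw [Finset.mul_sum, Finset.mul_sum]
    -- extend RHS sum to range (n + 1 - j)
    have hsub : range (n - (j + k) + 1) ⊆ range (n + 1 - j) := by
      apply Finset.range_subset_range.2; omega
    have hext : ∑ i ∈ range (n - (j + k) + 1), ((j + k).choose j : F) *
          ((n.choose (j + k) : F) * (α ^ i * β ^ (n - (j + k) - i) * ((n - (j + k)).choose i : F)))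
        = ∑ i ∈ range (n + 1 - j), ((j + k).choose j : F) *
          ((n.choose (j + k) : F) *
            (α ^ i * β ^ (n - (j + k) - i) * ((n - (j + k)).choose i : F))) := by
      refine Finset.sum_subset hsub ?_
      intro i _ hi
      simp only [Finset.mem_range, not_lt] at hi
      rw [Nat.choose_eq_zero_of_lt (show n - (j + k) < i by omega)]
      push_cast
      ring
    rw [hext]
    -- restrict LHS sum to m ≥ j and reindex
    have hsub2 : Finset.Ico j (n + 1) ⊆ range (n + 1) := by
      intro m hm; simp only [Finset.mem_Ico] at hm; simp; omega
    have hres : ∑ m ∈ Finset.Ico j (n + 1), (n.choose m : F) * ((m.choose j : F) * α ^ (m - j))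
          * (((n - m).choose k : F) * β ^ (n - m - k))
        = ∑ m ∈ range (n + 1), (n.choose m : F) * ((m.choose j : F) * α ^ (m - j))
          * (((n - m).choose k : F) * β ^ (n - m - k)) := by
      refine Finset.sum_subset hsub2 ?_
      intro m hm hm2
      simp only [Finset.mem_range] at hm
      simp only [Finset.mem_Ico, not_and, not_lt] at hm2
      have hmj : m < j := by omega
      rw [Nat.choose_eq_zero_of_lt hmj]
      push_cast
      ring
    rw [← hres, Finset.sum_Ico_eq_sum_range]
    apply Finset.sum_congr rfl
    intro i hi
    simp only [Finset.mem_range] at hi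
    by_cases hik : j + k + i ≤ n
    · have e1 : j + i - j = i := by omega
      have e2 : n - (j + i) - k = n - (j + k) - i := by omega
      rw [e1, e2]
      have := key_nat n j k i hik
      have hc : (↑(n.choose (j + i) * (j + i).choose j * ((n - (j + i)).choose k)) : F)
          = ↑((j + k).choose j * (n.choose (j + k) * ((n - (j + k)).choose i))) := by
        exact_mod_cast this
      push_cast at hc
      calc (↑(n.choose (j + i)) : F) * (↑((j + i).choose j) * α ^ i)
            * (↑((n - (j + i)).choose k) * β ^ (n - (j + k) - i))
          = (↑(n.choose (j + i)) * ↑((j + i).choose j) * ↑((n - (j + i)).choose k))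
            * (α ^ i * β ^ (n - (j + k) - i)) := by ring
        _ = _ := by rw [hc]; ring
    · have h1 : (n - (j + i)).choose k = 0 := Nat.choose_eq_zero_of_lt (by omega)
      have h2 : (n - (j + k)).choose i = 0 := Nat.choose_eq_zero_of_lt (by omega)
      rw [h1, h2]
      push_cast
      ring
  · rw [Nat.choose_eq_zero_of_lt (by omega : n < j + k)]
    push_cast
    rw [Finset.sum_eq_zero]
    · ring
    intro m hm
    simp only [Finset.mem_range] at hm
    by_cases hmj : m < j
    · rw [Nat.choose_eq_zero_of_lt hmj]; push_cast; ring
    · rw [Nat.choose_eq_zero_of_lt (show n - m < k by omega)]; push_cast; ring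
end

section
/- Let F ⊆ G be fields and let A(x) = ∑ aₙxⁿ be a formal power series with all coefficients aₙ in F. If there exist polynomials p(x), q(x) with coefficients in G such that q(x)·A(x) = p(x) with q ≠ 0, then there exist polynomials P(x), Q(x) with coefficients in F, Q ≠ 0, such that Q(x)·A(x) = P(x). -/
open PowerSeries

private lemma coeff_polymul {R : Type*} [CommRing R] (q : Polynomial R) (A : PowerSeries R)
    (d n : ℕ) (hd : q.natDegree ≤ d) (hn : d ≤ n) :
    PowerSeries.coeff n ((q : PowerSeries R) * A) =
      ∑ i ∈ Finset.range (d + 1), q.coeff i * PowerSeries.coeff (n - i) A := by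
  rw [PowerSeries.coeff_mul, Finset.Nat.sum_antidiagonal_eq_sum_range_succ_mk]
  simp only [Polynomial.coeff_coe]
  symm
  apply Finset.sum_subset (Finset.range_subset_range.2 (by omega))
  intro i _ hi
  rw [Polynomial.coeff_eq_zero_of_natDegree_lt (by simp at hi; omega), zero_mul]

theorem rational_over_extension_field {F G : Type*} [Field F] [Field G] [Algebra F G]
    (A : PowerSeries F)
    (h : ∃ p q : Polynomial G, q ≠ 0 ∧
      (q : PowerSeries G) * PowerSeries.map (algebraMap F G) A = (p : PowerSeries G)) :
    ∃ P Q : Polynomial F, Q ≠ 0 ∧ (Q : PowerSeries F) * A = (P : PowerSeries F) := by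
  obtain ⟨p, q, hq, heq⟩ := h
  set d := q.natDegree with hd
  set M := max (p.natDegree + 1) d with hM
  -- the G-linear recurrence satisfied by the coefficients of A
  have hrel : ∀ n, M ≤ n →
      ∑ i ∈ Finset.range (d + 1), q.coeff i * algebraMap F G (PowerSeries.coeff (n - i) A)
        = 0 := by
    intro n hn
    have h1 := congrArg (PowerSeries.coeff n) heq
    rw [coeff_polymul q _ d n le_rfl (le_trans (le_max_right _ _) hn),
      Polynomial.coeff_coe, Polynomial.coeff_eq_zero_of_natDegree_lt (by omega)] at h1
    simpa [PowerSeries.coeff_map] using h1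
  -- choose an F-basis of G, and a coordinate where the leading coefficient of q is nonzero
  set b := Module.Basis.ofVectorSpace F G with hb
  have hqd : q.coeff d ≠ 0 := by
    have h2 := Polynomial.leadingCoeff_ne_zero.2 hq
    rwa [Polynomial.leadingCoeff] at h2
  have hrepr : b.repr (q.coeff d) ≠ 0 := fun hz => hqd (by
    have := congrArg b.repr.symm hz
    simpa using this)
  obtain ⟨b0, hb0⟩ : ∃ b0, b.repr (q.coeff d) b0 ≠ 0 := by
    by_contra hc
    push_neg at hc
    exact hrepr (Finsupp.ext hc)
  set c : ℕ → F := fun i => b.repr (q.coeff i) b0 with hc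
  -- the F-linear recurrence obtained by taking the b0-coordinate
  have hrelF : ∀ n, M ≤ n →
      ∑ i ∈ Finset.range (d + 1), c i * PowerSeries.coeff (n - i) A = 0 := by
    intro n hn
    have h1 := congrArg (fun g => b.repr g b0) (hrel n hn)
    simp only [map_zero, Finsupp.coe_zero, Pi.zero_apply] at h1
    rw [map_sum, Finset.sum_apply'] at h1
    rw [← h1]
    apply Finset.sum_congr rfl
    intro i _
    rw [mul_comm (q.coeff i), ← Algebra.smul_def, map_smul, Finsupp.smul_apply,
      smul_eq_mul, mul_comm]
  -- build the F-polynomial Q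
  set Q : Polynomial F := ∑ i ∈ Finset.range (d + 1), Polynomial.C (c i) * Polynomial.X ^ i
    with hQ
  have hQcoeff : ∀ j, j ≤ d → Q.coeff j = c j := by
    intro j hj
    rw [hQ, Polynomial.finset_sum_coeff]
    simp only [Polynomial.coeff_C_mul, Polynomial.coeff_X_pow, mul_ite, mul_one, mul_zero]
    rw [Finset.sum_ite_eq (Finset.range (d + 1)) j c, if_pos (Finset.mem_range.2 (by omega))]
  have hQdeg : Q.natDegree ≤ d := by
    apply Polynomial.natDegree_sum_le_of_forall_le
    intro i hi
    refine le_trans (Polynomial.natDegree_C_mul_le _ _) ?_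
    simpa using Nat.lt_succ_iff.mp (Finset.mem_range.mp hi)
  have hQne : Q ≠ 0 := by
    intro hz
    apply hb0
    have := hQcoeff d le_rfl
    rw [hz, Polynomial.coeff_zero] at this
    exact this.symm
  -- Q * A has vanishing coefficients beyond M
  have hvanish : ∀ n, M ≤ n → PowerSeries.coeff n ((Q : PowerSeries F) * A) = 0 := by
    intro n hn
    rw [coeff_polymul Q A d n hQdeg (le_trans (le_max_right _ _) hn)]
    rw [← hrelF n hn]
    apply Finset.sum_congr rfl
    intro i hi
    rw [hQcoeff i (Nat.lt_succ_iff.mp (Finset.mem_range.mp hi))]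
  refine ⟨PowerSeries.trunc M ((Q : PowerSeries F) * A), Q, hQne, ?_⟩
  ext n
  rw [Polynomial.coeff_coe, PowerSeries.coeff_trunc]
  by_cases hn : n < M
  · rw [if_pos hn]
  · rw [if_neg hn, hvanish n (by omega)]
end

section
/- As formal power series over ℚ, (x/(1−ax−bx²)) ∗ (x/(1−cx−dx²)) = (x − bdx³)/(1 − acx − (a²d + bc² + 2bd)x² − abcd·x³ + b²d²x⁴), where ∗ denotes the Hadamard product and a,b,c,d are rational parameters. Equivalently, if uₙ satisfies u₀=0, u₁=1, u_{n+2}=a u_{n+1}+b uₙ and vₙ satisfies v₀=0, v₁=1, v_{n+2}=c v_{n+1}+d vₙ, then wₙ = uₙvₙ satisfies wₙ = ac·w_{n−1} + (a²d + bc² + 2bd)·w_{n−2} + abcd·w_{n−3} − b²d²·w_{n−4} for n ≥ 4. -/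
theorem hadamard_product_second_order {R : Type*} [CommRing R] (a b c d : R)
    (u v : ℕ → R) (hu0 : u 0 = 0) (hu1 : u 1 = 1)
    (hu : ∀ n, u (n + 2) = a * u (n + 1) + b * u n)
    (hv0 : v 0 = 0) (hv1 : v 1 = 1)
    (hv : ∀ n, v (n + 2) = c * v (n + 1) + d * v n) (n : ℕ) :
    u (n + 4) * v (n + 4) =
      a * c * (u (n + 3) * v (n + 3)) +
        (a ^ 2 * d + b * c ^ 2 + 2 * b * d) * (u (n + 2) * v (n + 2)) +
        a * b * c * d * (u (n + 1) * v (n + 1)) -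
        b ^ 2 * d ^ 2 * (u n * v n) := by
  have h2 := hu n; have h3 := hu (n+1); have h4 := hu (n+2)
  have g2 := hv n; have g3 := hv (n+1); have g4 := hv (n+2)
  simp only [show n+1+2 = n+3 from rfl, show n+2+2 = n+4 from rfl,
    show n+1+1 = n+2 from rfl, show n+2+1 = n+3 from rfl] at h3 h4 g3 g4
  rw [h4, g4, h3, g3, h2, g2]; ring
end
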